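/- arXiv:1103.4973 — 2 statements merged into one kernel-verified Lean document; each statement's English description precedes it below -/
import Mathlib

section
/- For every deterministic time m ≥ 0, E[X_m] − k = Σ_{n=1}^{∞} E[G_m^n](r_n − l_n), where G_m^n is the number of times m' with 0 ≤ m' ≤ m−1 and X_{m'} = n. -/
open MeasureTheory Filter Topology Finset
open scoped ENNReal NNReal Classical

/-- Partial products `t_n = (l_1 ⋯ l_n)/(r_1 ⋯ r_n)`, with `t_0 = 1`. -/
noncomputable def tp (l r : ℕ → ℝ) (n : ℕ) : ℝ :=
  (∏ i ∈ Finset.Icc 1 n, l i) / (∏ i ∈ Finset.Icc 1 n, r i)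

/-- `x_n = Σ_{i=0}^{n-1} t_i`. -/
noncomputable def xp (l r : ℕ → ℝ) (n : ℕ) : ℝ :=
  ∑ i ∈ Finset.range n, tp l r i

/-- The natural filtration of the process `X` (σ-algebra generated by `X_0, …, X_m`). -/
def natFilt {Ω : Type*} (X : ℕ → Ω → ℕ) (m : ℕ) : MeasurableSpace Ω :=
  ⨆ i ∈ Finset.range (m + 1), MeasurableSpace.comap (X i) ⊤

/-- A birth–death chain on ℕ started at `k`, with up–probabilities `r n` and
down–probabilities `l n` for states `n ≥ 1`, and `0` absorbing.  The Markov
property is encoded by conditioning on arbitrary events of the natural filtration. -/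
structure IsBDChain {Ω : Type*} [MeasurableSpace Ω] (P : Measure Ω)
    (X : ℕ → Ω → ℕ) (k : ℕ) (l r : ℕ → ℝ) : Prop where
  isProb : IsProbabilityMeasure P
  one_le_k : 1 ≤ k
  l_pos : ∀ n, 1 ≤ n → 0 < l n
  r_pos : ∀ n, 1 ≤ n → 0 < r n
  lr_one : ∀ n, 1 ≤ n → l n + r n = 1
  meas : ∀ m, Measurable (X m)
  init : ∀ᵐ ω ∂P, X 0 ω = k
  absorb : ∀ᵐ ω ∂P, ∀ m, X m ω = 0 → X (m + 1) ω = 0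
  step_up : ∀ m n, 1 ≤ n → ∀ A : Set Ω, MeasurableSet[natFilt X m] A →
    P (A ∩ {ω | X m ω = n ∧ X (m + 1) ω = n + 1}) =
      ENNReal.ofReal (r n) * P (A ∩ {ω | X m ω = n})
  step_down : ∀ m n, 1 ≤ n → ∀ A : Set Ω, MeasurableSet[natFilt X m] A →
    P (A ∩ {ω | X m ω = n ∧ X (m + 1) ω = n - 1}) =
      ENNReal.ofReal (l n) * P (A ∩ {ω | X m ω = n})

/-- A (finite-valued) stopping time for the natural filtration of `X`. -/
def IsBDStop {Ω : Type*} (X : ℕ → Ω → ℕ) (T : Ω → ℕ) : Prop :=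
  ∀ m, MeasurableSet[natFilt X m] {ω | T ω = m}

/-- An extended-ℕ-valued stopping time for the natural filtration of `X`. -/
def IsBDStopE {Ω : Type*} (X : ℕ → Ω → ℕ) (T : Ω → ℕ∞) : Prop :=
  ∀ m : ℕ, MeasurableSet[natFilt X m] {ω | T ω = (m : ℕ∞)}

/-- First hitting time of the set `S ⊆ ℕ` by the path `m ↦ X m ω`, valued in `ℕ∞`. -/
noncomputable def hitTime {Ω : Type*} (X : ℕ → Ω → ℕ) (S : Set ℕ) (ω : Ω) : ℕ∞ :=
  sInf ((fun m : ℕ => (m : ℕ∞)) '' {m | X m ω ∈ S})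

/-- `T_∂`: the first hitting time of `0`, with value `∞` if `0` is never hit. -/
noncomputable def hit0 {Ω : Type*} (X : ℕ → Ω → ℕ) (ω : Ω) : ℕ∞ :=
  hitTime X {0} ω

/-- `G_T^n`: the number of times `m` with `0 ≤ m ≤ T-1` and `X_m = n` (finite `T`). -/
def count {Ω : Type*} (X : ℕ → Ω → ℕ) (n : ℕ) (T : Ω → ℕ) (ω : Ω) : ℕ :=
  ((Finset.range (T ω)).filter fun m => X m ω = n).card

/-- `G_τ^n` for an `ℕ∞`-valued time `τ`, valued in `ℝ≥0∞`. -/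
noncomputable def countE {Ω : Type*} (X : ℕ → Ω → ℕ) (n : ℕ) (τ : Ω → ℕ∞) (ω : Ω) : ℝ≥0∞ :=
  ∑' m : ℕ, if (m : ℕ∞) < τ ω ∧ X m ω = n then 1 else 0

/-!
Off the absorbing state the chain moves by exactly `±1` almost surely (the up and down
transitions out of `n ≥ 1` carry all of `P (X_j = n)` because `r n + l n = 1`), and at `0` it
does not move. Splitting `E[X_{j+1} - X_j]` along the value of `X_j` therefore gives
`E[X_{j+1}] - E[X_j] = ∑ₙ P(X_j = n) (r n - l n)`. Summing over `j < m`, the left side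
telescopes to `E[X_m] - k` and on the right `∑_{j<m} P(X_j = n) = E[G_m^n]`.
-/

section

variable {Ω : Type*} [MeasurableSpace Ω] {P : Measure Ω}

theorem hasSum_setIntegral_fiber {α E : Type*} [Countable α] [MeasurableSpace α]
    [MeasurableSingletonClass α] [NormedAddCommGroup E] [NormedSpace ℝ E]
    {Y : Ω → α} (hY : Measurable Y) {f : Ω → E} (hf : Integrable f P) :
    HasSum (fun a => ∫ ω in {ω | Y ω = a}, f ω ∂P) (∫ ω, f ω ∂P) := by
  have hcover : ⋃ a, {ω | Y ω = a} = Set.univ := Set.iUnion_eq_univ_iff.2 fun ω => ⟨Y ω, rfl⟩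
  simpa only [hcover, Measure.restrict_univ] using
    hasSum_integral_iUnion (s := fun a => {ω | Y ω = a}) (fun a => hY (measurableSet_singleton a))
      (pairwise_disjoint_fiber Y) (by rw [hcover]; exact hf.integrableOn)

theorem integral_count_eq_sum [IsFiniteMeasure P] {X : ℕ → Ω → ℕ} (hX : ∀ j, Measurable (X j))
    (n m : ℕ) :
    ∫ ω, (count X n (fun _ => m) ω : ℝ) ∂P = ∑ j ∈ range m, P.real {ω | X j ω = n} := by
  have hmeas : ∀ j, MeasurableSet {ω | X j ω = n} := fun j => hX j (measurableSet_singleton n)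
  have hcount : ∀ ω, (count X n (fun _ => m) ω : ℝ) =
      ∑ j ∈ range m, {ω | X j ω = n}.indicator 1 ω := by
    intro ω
    rw [count, card_filter]
    push_cast
    exact sum_congr rfl fun j _ => by by_cases h : X j ω = n <;> simp [h]
  simp_rw [hcount]
  rw [integral_finsetSum _ fun j _ => (integrable_const 1).indicator (hmeas j)]
  exact sum_congr rfl fun j _ => integral_indicator_one (hmeas j)

end

namespace IsBDChain

variable {Ω : Type*} [MeasurableSpace Ω] {P : Measure Ω} {X : ℕ → Ω → ℕ} {k : ℕ} {l r : ℕ → ℝ}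

theorem measurableSet_eq (hC : IsBDChain P X k l r) (i n : ℕ) : MeasurableSet {ω | X i ω = n} :=
  hC.meas i (measurableSet_singleton n)

theorem measure_up (hC : IsBDChain P X k l r) (j : ℕ) {n : ℕ} (hn : 1 ≤ n) :
    P {ω | X j ω = n ∧ X (j + 1) ω = n + 1} = ENNReal.ofReal (r n) * P {ω | X j ω = n} := by
  simpa using hC.step_up j n hn Set.univ MeasurableSet.univ

theorem measure_down (hC : IsBDChain P X k l r) (j : ℕ) {n : ℕ} (hn : 1 ≤ n) :
    P {ω | X j ω = n ∧ X (j + 1) ω = n - 1} = ENNReal.ofReal (l n) * P {ω | X j ω = n} := by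
  simpa using hC.step_down j n hn Set.univ MeasurableSet.univ

theorem ae_step (hC : IsBDChain P X k l r) :
    ∀ᵐ ω ∂P, ∀ j n, 1 ≤ n → X j ω = n → X (j + 1) ω = n + 1 ∨ X (j + 1) ω = n - 1 := by
  have := hC.isProb
  simp only [ae_all_iff]
  intro j n hn
  set U := {ω | X j ω = n ∧ X (j + 1) ω = n + 1}
  set D := {ω | X j ω = n ∧ X (j + 1) ω = n - 1}
  have hU : MeasurableSet U := (hC.measurableSet_eq j n).inter (hC.measurableSet_eq _ _)
  have hD : MeasurableSet D := (hC.measurableSet_eq j n).inter (hC.measurableSet_eq _ _)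
  have hUD : U ∪ D ⊆ {ω | X j ω = n} := by rintro ω (⟨h, _⟩ | ⟨h, _⟩) <;> exact h
  have hfull : P (U ∪ D) = P {ω | X j ω = n} := by
    have hdisj : Disjoint U D := Set.disjoint_left.2 fun ω hU hD => by
      have := hU.2.symm.trans hD.2; omega
    rw [measure_union hdisj hD, hC.measure_up j hn, hC.measure_down j hn, ← add_mul,
      ← ENNReal.ofReal_add (hC.r_pos n hn).le (hC.l_pos n hn).le, add_comm, hC.lr_one n hn,
      ENNReal.ofReal_one, one_mul]
  have hnull : P ({ω | X j ω = n} \ (U ∪ D)) = 0 := by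
    rw [measure_sdiff hUD (hU.union hD).nullMeasurableSet (measure_ne_top P _), hfull, tsub_self]
  refine measure_mono_null (fun ω hω => ?_) hnull
  obtain ⟨hXn, hnot⟩ := Classical.not_imp.1 hω
  exact ⟨hXn, fun h => hnot (Or.imp And.right And.right h)⟩

theorem ae_le_add (hC : IsBDChain P X k l r) : ∀ᵐ ω ∂P, ∀ j, X j ω ≤ k + j := by
  filter_upwards [hC.init, hC.absorb, hC.ae_step] with ω hinit habs hstep j
  induction j with
  | zero => omega
  | succ j ih =>
    rcases Nat.eq_zero_or_pos (X j ω) with h | h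
    · have := habs j h; omega
    · rcases hstep j _ h rfl with h' | h' <;> omega

theorem integrable (hC : IsBDChain P X k l r) (j : ℕ) : Integrable (fun ω => (X j ω : ℝ)) P := by
  have := hC.isProb
  refine .of_bound (measurable_from_top.comp (hC.meas j)).aestronglyMeasurable (k + j) ?_
  filter_upwards [hC.ae_le_add] with ω hω
  simpa using (Nat.cast_le (α := ℝ)).2 (hω j)

theorem setIntegral_increment (hC : IsBDChain P X k l r) (j : ℕ) {n : ℕ} (hn : 1 ≤ n) :
    ∫ ω in {ω | X j ω = n}, ((X (j + 1) ω : ℝ) - X j ω) ∂P =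
      P.real {ω | X j ω = n} * (r n - l n) := by
  have := hC.isProb
  calc ∫ ω in {ω | X j ω = n}, ((X (j + 1) ω : ℝ) - X j ω) ∂P
      = ∫ ω in {ω | X j ω = n},
          ({ω | X (j + 1) ω = n + 1}.indicator 1 ω - {ω | X (j + 1) ω = n - 1}.indicator 1 ω) ∂P := by
        refine setIntegral_congr_ae (hC.measurableSet_eq j n) ?_
        filter_upwards [hC.ae_step] with ω hstep hXn
        have hne : n - 1 ≠ n + 1 := by omega
        rcases hstep j n hn hXn with h | h
        · simp [hXn, h, hne.symm]
        · simp [hXn, h, hne, Nat.cast_sub hn]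
    _ = P.real {ω | X j ω = n ∧ X (j + 1) ω = n + 1} -
          P.real {ω | X j ω = n ∧ X (j + 1) ω = n - 1} := by
        rw [integral_sub, setIntegral_indicator (hC.measurableSet_eq _ _),
          setIntegral_indicator (hC.measurableSet_eq _ _)]
        · simp [Set.ofPred_and]
        all_goals exact ((integrable_const 1).indicator (hC.measurableSet_eq _ _)).integrableOn
    _ = P.real {ω | X j ω = n} * (r n - l n) := by
        simp only [measureReal_def, hC.measure_up j hn, hC.measure_down j hn, ENNReal.toReal_mul,
          ENNReal.toReal_ofReal (hC.r_pos n hn).le, ENNReal.toReal_ofReal (hC.l_pos n hn).le]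
        ring

theorem hasSum_drift (hC : IsBDChain P X k l r) (j : ℕ) :
    HasSum (fun n => P.real {ω | X j ω = n + 1} * (r (n + 1) - l (n + 1)))
      (∫ ω, (X (j + 1) ω : ℝ) ∂P - ∫ ω, (X j ω : ℝ) ∂P) := by
  have hsum := hasSum_setIntegral_fiber (hC.meas j)
    (f := fun ω => (X (j + 1) ω : ℝ) - X j ω) ((hC.integrable (j + 1)).sub (hC.integrable j))
  have hzero : ∫ ω in {ω | X j ω = 0}, ((X (j + 1) ω : ℝ) - X j ω) ∂P = 0 := by
    refine setIntegral_eq_zero_of_ae_eq_zero ?_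
    filter_upwards [hC.absorb] with ω habs hX0
    simp [hX0, habs j hX0]
  rw [← hasSum_nat_add_iff' 1] at hsum
  rw [← integral_sub (hC.integrable _) (hC.integrable _)]
  simpa [hzero, hC.setIntegral_increment j] using hsum

end IsBDChain

/-- For every deterministic time `m`,
`E[X_m] - k = Σ_{n=1}^∞ E[G_m^n] (r_n - l_n)`. -/
theorem stmt4 {Ω : Type*} [MeasurableSpace Ω] (P : Measure Ω) (X : ℕ → Ω → ℕ)
    (k : ℕ) (l r : ℕ → ℝ) (hC : IsBDChain P X k l r) (m : ℕ) :
    ∫ ω, (X m ω : ℝ) ∂P - k =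
      ∑' n : ℕ, (∫ ω, (count X (n + 1) (fun _ => m) ω : ℝ) ∂P) * (r (n + 1) - l (n + 1)) := by
  have := hC.isProb
  have hinit : ∫ ω, (X 0 ω : ℝ) ∂P = k := by
    rw [integral_congr_ae (hC.init.mono fun ω h => congrArg Nat.cast h)]
    simp
  rw [← hinit, ← sum_range_sub (fun j => ∫ ω, (X j ω : ℝ) ∂P)]
  refine (HasSum.tsum_eq ?_).symm
  simp_rw [integral_count_eq_sum hC.meas, sum_mul]
  exact hasSum_sum fun j _ => hC.hasSum_drift j
end

section
/- If Σ_{n=0}^{∞} t_n < ∞, then the probability that the birth–death chain started at k ever hits 0 equals (Σ_{n=k}^{∞} t_n)/(Σ_{n=0}^{∞} t_n). -/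
open MeasureTheory Filter Topology Finset
open scoped ENNReal NNReal Classical

/-!
Write `x n = t 0 + ⋯ + t (n - 1)` and `S = ∑ t n`. Since `r n * t n = l n * t (n - 1)`, the
function `x` is harmonic for the chain: `r n * x (n + 1) + l n * x (n - 1) = x n` for `n ≥ 1`, and
`x 0 = 0`. Hence `E[x (X (min m τ))] = x k` for every `m`, where `τ` is the exit time from any set
of states.

* Stopping on hitting `0` and using `x ≤ S` gives `x k ≤ S * P(0 is never hit)`.
* Stopping on leaving `(0, N)`: from every state of `(0, N)` the chain walks down to `0` within
  `N - 1` steps with probability bounded below, so it leaves `(0, N)` almost surely, and it leaves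
  upwards with probability at most `x k / x N`. Hence `P(0 is never hit) ≤ x k / x N → x k / S`.

So `0` is hit with probability `1 - x k / S = (∑_{n ≥ k} t n) / S`.
-/

section Weights

variable {l r : ℕ → ℝ}

lemma tp_zero : tp l r 0 = 1 := by simp [tp]

lemma tp_pos (hl : ∀ n, 1 ≤ n → 0 < l n) (hr : ∀ n, 1 ≤ n → 0 < r n) (n : ℕ) :
    0 < tp l r n :=
  div_pos (prod_pos fun i hi => hl i (mem_Icc.mp hi).1)
    (prod_pos fun i hi => hr i (mem_Icc.mp hi).1)

lemma r_mul_tp_succ (n : ℕ) (hr : r (n + 1) ≠ 0) :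
    r (n + 1) * tp l r (n + 1) = l (n + 1) * tp l r n := by
  unfold tp
  rw [prod_Icc_succ_top (by omega), prod_Icc_succ_top (by omega), mul_comm _ (r (n + 1)),
    ← div_div, div_right_comm, mul_div_cancel₀ _ hr]
  ring

lemma xp_succ (n : ℕ) : xp l r (n + 1) = xp l r n + tp l r n :=
  sum_range_succ _ _

lemma xp_harmonic (hr : ∀ n, 1 ≤ n → 0 < r n) (hlr : ∀ n, 1 ≤ n → l n + r n = 1)
    {n : ℕ} (hn : 1 ≤ n) :
    r n * xp l r (n + 1) + l n * xp l r (n - 1) = xp l r n := by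
  obtain ⟨j, rfl⟩ : ∃ j, n = j + 1 := ⟨n - 1, by omega⟩
  rw [Nat.add_sub_cancel, xp_succ, xp_succ]
  linear_combination (xp l r j + tp l r j) * hlr (j + 1) hn +
    r_mul_tp_succ (l := l) j (hr (j + 1) hn).ne'

lemma tendsto_xp (hsum : Summable (tp l r)) :
    Tendsto (xp l r) atTop (𝓝 (∑' i, tp l r i)) :=
  hsum.hasSum.tendsto_sum_nat

lemma tsum_tp_add (hsum : Summable (tp l r)) (k : ℕ) :
    ∑' n, tp l r (k + n) = ∑' n, tp l r n - xp l r k := by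
  rw [← hsum.sum_add_tsum_nat_add k, xp]
  simp [add_comm]

lemma exists_pos_le_ofReal (hl : ∀ n, 1 ≤ n → 0 < l n) (N : ℕ) :
    ∃ c : ℝ≥0∞, 0 < c ∧ c ≤ 1 ∧ ∀ n, 0 < n → n < N → c ≤ ENNReal.ofReal (l n) := by
  refine ⟨min 1 ((Finset.Ioo 0 N).inf fun n => ENNReal.ofReal (l n)), ?_, min_le_left _ _,
    fun n hn hnN => (min_le_right _ _).trans (Finset.inf_le (by simp [hn, hnN]))⟩
  refine lt_min one_pos ((Finset.lt_inf_iff ENNReal.zero_lt_top).mpr fun n hn => ?_)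
  exact ENNReal.ofReal_pos.mpr (hl n (Finset.mem_Ioo.mp hn).1)

variable (hl : ∀ n, 1 ≤ n → 0 < l n) (hr : ∀ n, 1 ≤ n → 0 < r n)
include hl hr

lemma xp_mono : Monotone (xp l r) :=
  monotone_nat_of_le_succ fun n => by
    rw [xp_succ]; linarith [tp_pos hl hr n]

lemma xp_nonneg (n : ℕ) : 0 ≤ xp l r n := by
  simpa [xp] using xp_mono hl hr (Nat.zero_le n)

lemma one_le_xp {n : ℕ} (hn : 1 ≤ n) : 1 ≤ xp l r n := by
  simpa [xp, tp_zero] using xp_mono hl hr hn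

lemma xp_le_tsum (hsum : Summable (tp l r)) (n : ℕ) : xp l r n ≤ ∑' i, tp l r i :=
  hsum.sum_le_tsum _ fun i _ => (tp_pos hl hr i).le

lemma one_le_tsum_tp (hsum : Summable (tp l r)) : 1 ≤ ∑' i, tp l r i :=
  (one_le_xp hl hr le_rfl).trans (xp_le_tsum hl hr hsum 1)

end Weights

section NaturalFiltration

variable {Ω : Type*} {X : ℕ → Ω → ℕ}

lemma measurable_natFilt {i m : ℕ} (hi : i ≤ m) : Measurable[natFilt X m] (X i) :=
  Measurable.of_comap_le <|
    le_iSup₂ (f := fun i (_ : i ∈ range (m + 1)) => MeasurableSpace.comap (X i) ⊤) i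
      (mem_range.mpr (by omega))

lemma natFilt_mono {m m' : ℕ} (h : m ≤ m') : natFilt X m ≤ natFilt X m' :=
  iSup₂_le fun _ hi => (measurable_natFilt (by simp at hi; omega)).comap_le

lemma natFilt_le [MeasurableSpace Ω] (hX : ∀ m, Measurable (X m)) (m : ℕ) :
    natFilt X m ≤ ‹MeasurableSpace Ω› :=
  iSup₂_le fun i _ => (hX i).comap_le

end NaturalFiltration

/-- `E[g n (X (m + 1)) | X m = n]` for the chain. -/
noncomputable def oneStepMean (l r : ℕ → ℝ) (g : ℕ → ℕ → ℝ≥0∞) (n : ℕ) : ℝ≥0∞ :=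
  if n = 0 then g 0 0
  else ENNReal.ofReal (r n) * g n (n + 1) + ENNReal.ofReal (l n) * g n (n - 1)

lemma oneStepMean_xp {l r : ℕ → ℝ} (hl : ∀ n, 1 ≤ n → 0 < l n) (hr : ∀ n, 1 ≤ n → 0 < r n)
    (hlr : ∀ n, 1 ≤ n → l n + r n = 1) (n : ℕ) :
    oneStepMean l r (fun _ i => ENNReal.ofReal (xp l r i)) n = ENNReal.ofReal (xp l r n) := by
  rcases Nat.eq_zero_or_pos n with rfl | hn
  · exact if_pos rfl
  rw [oneStepMean, if_neg hn.ne', ← ENNReal.ofReal_mul (hr n hn).le,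
    ← ENNReal.ofReal_mul (hl n hn).le, ← ENNReal.ofReal_add
      (mul_nonneg (hr n hn).le (xp_nonneg hl hr _)) (mul_nonneg (hl n hn).le (xp_nonneg hl hr _)),
    xp_harmonic hr hlr hn]

lemma setLIntegral_eq_tsum_inter {Ω : Type*} [MeasurableSpace Ω] {μ : Measure Ω} {Y : Ω → ℕ}
    (hY : Measurable Y) {A : Set Ω} (hA : MeasurableSet A) (f : Ω → ℝ≥0∞) :
    ∫⁻ ω in A, f ω ∂μ = ∑' n, ∫⁻ ω in A ∩ {ω | Y ω = n}, f ω ∂μ := by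
  have hmeas (n : ℕ) : MeasurableSet (A ∩ {ω | Y ω = n}) :=
    hA.inter (hY (measurableSet_singleton n))
  rw [← lintegral_iUnion hmeas
    fun n n' hnn' => Set.disjoint_left.mpr fun ω h h' => hnn' (h.2.symm.trans h'.2)]
  congr
  ext ω
  simp

/-- `X (min m τ)`, where `τ` is the first time the chain is outside `D`. -/
noncomputable def stoppedOnExit {Ω : Type*} (X : ℕ → Ω → ℕ) (D : Set ℕ) : ℕ → Ω → ℕ
  | 0 => X 0
  | m + 1 => fun ω =>
    if stoppedOnExit X D m ω ∈ D then X (m + 1) ω else stoppedOnExit X D m ω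

section StoppedOnExit

variable {Ω : Type*} {X : ℕ → Ω → ℕ} {D : Set ℕ} {m : ℕ} {ω : Ω}

lemma stoppedOnExit_zero : stoppedOnExit X D 0 = X 0 := rfl

lemma stoppedOnExit_succ_of_mem (h : stoppedOnExit X D m ω ∈ D) :
    stoppedOnExit X D (m + 1) ω = X (m + 1) ω :=
  if_pos h

lemma stoppedOnExit_succ_of_notMem (h : stoppedOnExit X D m ω ∉ D) :
    stoppedOnExit X D (m + 1) ω = stoppedOnExit X D m ω :=
  if_neg h

lemma mem_of_stoppedOnExit_succ_mem (h : stoppedOnExit X D (m + 1) ω ∈ D) :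
    stoppedOnExit X D m ω ∈ D := by
  by_contra hm
  exact hm (stoppedOnExit_succ_of_notMem hm ▸ h)

lemma mem_of_stoppedOnExit_add_mem {j : ℕ} (h : stoppedOnExit X D (m + j) ω ∈ D) :
    stoppedOnExit X D m ω ∈ D := by
  induction j with
  | zero => exact h
  | succ j ih => exact ih (mem_of_stoppedOnExit_succ_mem h)

lemma stoppedOnExit_eq_of_mem (h : stoppedOnExit X D m ω ∈ D) :
    stoppedOnExit X D m ω = X m ω := by
  cases m with
  | zero => rfl
  | succ m => exact stoppedOnExit_succ_of_mem (mem_of_stoppedOnExit_succ_mem h)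

lemma exists_stoppedOnExit_eq (X : ℕ → Ω → ℕ) (D : Set ℕ) (m : ℕ) (ω : Ω) :
    ∃ i ≤ m, stoppedOnExit X D m ω = X i ω := by
  induction m with
  | zero => exact ⟨0, le_rfl, rfl⟩
  | succ m ih =>
    by_cases h : stoppedOnExit X D m ω ∈ D
    · exact ⟨m + 1, le_rfl, stoppedOnExit_succ_of_mem h⟩
    · obtain ⟨i, hi, hXi⟩ := ih
      exact ⟨i, by omega, (stoppedOnExit_succ_of_notMem h).trans hXi⟩

lemma measurable_natFilt_stoppedOnExit (X : ℕ → Ω → ℕ) (D : Set ℕ) (m : ℕ) :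
    Measurable[natFilt X m] (stoppedOnExit X D m) := by
  induction m with
  | zero =>
    rw [stoppedOnExit_zero]
    exact measurable_natFilt le_rfl
  | succ m ih =>
    have ih' : Measurable[natFilt X (m + 1)] (stoppedOnExit X D m) :=
      ih.mono (natFilt_mono m.le_succ) le_rfl
    have hD : MeasurableSet[natFilt X (m + 1)] {ω | stoppedOnExit X D m ω ∈ D} :=
      ih' MeasurableSet.of_discrete
    exact Measurable.ite hD (measurable_natFilt le_rfl) ih'

lemma iInter_stoppedOnExit_ne_zero (X : ℕ → Ω → ℕ) :
    ⋂ m, {ω | stoppedOnExit X {n | n ≠ 0} m ω ≠ 0} = {ω | ∀ m, X m ω ≠ 0} := by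
  ext ω
  simp only [Set.mem_iInter, Set.mem_ofPred_eq]
  constructor
  · intro h m
    exact stoppedOnExit_eq_of_mem (D := {n | n ≠ 0}) (h m) ▸ h m
  · intro h m
    obtain ⟨i, -, hi⟩ := exists_stoppedOnExit_eq X {n | n ≠ 0} m ω
    rw [hi]
    exact h i

end StoppedOnExit

namespace IsBDChain

variable {Ω : Type*} [MeasurableSpace Ω] {P : Measure Ω} {X : ℕ → Ω → ℕ} {k : ℕ}
  {l r : ℕ → ℝ} (hC : IsBDChain P X k l r)
include hC

lemma measurableSet_of_natFilt {m : ℕ} {A : Set Ω} (hA : MeasurableSet[natFilt X m] A) :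
    MeasurableSet A :=
  natFilt_le hC.meas m A hA

lemma measurableSet_eq_s6 (m n : ℕ) : MeasurableSet {ω | X m ω = n} :=
  hC.meas m (measurableSet_singleton n)

lemma setLIntegral_inter_eq_oneStepMean_mul {m n : ℕ} {A : Set Ω}
    (hA : MeasurableSet[natFilt X m] A) (g : ℕ → ℕ → ℝ≥0∞) :
    ∫⁻ ω in A ∩ {ω | X m ω = n}, g (X m ω) (X (m + 1) ω) ∂P =
      oneStepMean l r g n * P (A ∩ {ω | X m ω = n}) := by
  have hA' := hC.measurableSet_of_natFilt hA
  have hB := hA'.inter (hC.measurableSet_eq_s6 m n)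
  rcases Nat.eq_zero_or_pos n with rfl | hn
  · rw [oneStepMean, if_pos rfl, ← setLIntegral_const]
    refine setLIntegral_congr_fun_ae hB ?_
    filter_upwards [hC.absorb] with ω hω hωB
    rw [hωB.2, hω m hωB.2]
  set up := A ∩ {ω | X m ω = n ∧ X (m + 1) ω = n + 1}
  set down := A ∩ {ω | X m ω = n ∧ X (m + 1) ω = n - 1}
  have hud : Disjoint up down := Set.disjoint_left.mpr fun ω hωu hωd => by
    have := hωu.2.2.symm.trans hωd.2.2
    omega
  have hup : MeasurableSet up :=
    hA'.inter ((hC.measurableSet_eq_s6 m n).inter (hC.measurableSet_eq_s6 (m + 1) (n + 1)))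
  have hdown : MeasurableSet down :=
    hA'.inter ((hC.measurableSet_eq_s6 m n).inter (hC.measurableSet_eq_s6 (m + 1) (n - 1)))
  have hcover : (up ∪ down : Set Ω) =ᵐ[P] (A ∩ {ω | X m ω = n} : Set Ω) := by
    refine ae_eq_of_subset_of_measure_ge ?_ ?_ (hup.union hdown).nullMeasurableSet ?_
    · rintro ω (h | h) <;> exact ⟨h.1, h.2.1⟩
    · rw [measure_union hud hdown, hC.step_up m n hn A hA, hC.step_down m n hn A hA, ← add_mul,
        ← ENNReal.ofReal_add (hC.r_pos n hn).le (hC.l_pos n hn).le, add_comm, hC.lr_one n hn,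
        ENNReal.ofReal_one, one_mul]
    · have := hC.isProb
      exact measure_ne_top P _
  rw [← setLIntegral_congr hcover, lintegral_union hdown hud,
    setLIntegral_congr_fun hup fun ω h => by rw [h.2.1, h.2.2],
    setLIntegral_congr_fun hdown fun ω h => by rw [h.2.1, h.2.2],
    setLIntegral_const, setLIntegral_const, hC.step_up m n hn A hA, hC.step_down m n hn A hA,
    oneStepMean, if_neg hn.ne']
  ring

lemma setLIntegral_step {m : ℕ} {A : Set Ω} (hA : MeasurableSet[natFilt X m] A)
    (g : ℕ → ℕ → ℝ≥0∞) :
    ∫⁻ ω in A, g (X m ω) (X (m + 1) ω) ∂P = ∫⁻ ω in A, oneStepMean l r g (X m ω) ∂P := by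
  have hA' := hC.measurableSet_of_natFilt hA
  rw [setLIntegral_eq_tsum_inter (hC.meas m) hA', setLIntegral_eq_tsum_inter (hC.meas m) hA']
  congr 1
  ext n
  rw [hC.setLIntegral_inter_eq_oneStepMean_mul hA, ← setLIntegral_const]
  exact setLIntegral_congr_fun (hA'.inter (hC.measurableSet_eq_s6 m n)) fun ω hω => by rw [hω.2]

lemma measurable_stoppedOnExit (D : Set ℕ) (m : ℕ) : Measurable (stoppedOnExit X D m) :=
  (measurable_natFilt_stoppedOnExit X D m).mono (natFilt_le hC.meas m) le_rfl

lemma lintegral_stoppedOnExit {h : ℕ → ℝ≥0∞} (hh : ∀ n, oneStepMean l r (fun _ => h) n = h n)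
    (D : Set ℕ) (m : ℕ) : ∫⁻ ω, h (stoppedOnExit X D m ω) ∂P = h k := by
  have := hC.isProb
  induction m with
  | zero =>
    rw [lintegral_congr_ae (hC.init.mono fun ω hω => by rw [stoppedOnExit_zero, hω]),
      lintegral_const, measure_univ, mul_one]
  | succ m ih =>
    set A := {ω | stoppedOnExit X D m ω ∈ D}
    have hA : MeasurableSet[natFilt X m] A :=
      measurable_natFilt_stoppedOnExit X D m MeasurableSet.of_discrete
    have hA' := hC.measurableSet_of_natFilt hA
    rw [← ih, ← lintegral_add_compl (fun ω => h (stoppedOnExit X D (m + 1) ω)) hA',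
      ← lintegral_add_compl (fun ω => h (stoppedOnExit X D m ω)) hA']
    congr 1
    · calc ∫⁻ ω in A, h (stoppedOnExit X D (m + 1) ω) ∂P
          = ∫⁻ ω in A, h (X (m + 1) ω) ∂P :=
            setLIntegral_congr_fun hA' fun ω hω => by rw [stoppedOnExit_succ_of_mem hω]
        _ = ∫⁻ ω in A, oneStepMean l r (fun _ => h) (X m ω) ∂P :=
            hC.setLIntegral_step hA fun _ => h
        _ = ∫⁻ ω in A, h (stoppedOnExit X D m ω) ∂P :=
            setLIntegral_congr_fun hA' fun ω hω => by rw [hh, stoppedOnExit_eq_of_mem hω]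
    · exact setLIntegral_congr_fun hA'.compl fun ω hω => by
        rw [stoppedOnExit_succ_of_notMem hω]

-- `X m - 1` is truncated, so a path absorbed at `0` counts as stepping down.
lemma mul_measure_le_measure_step_down {m N : ℕ} {A : Set Ω} (hA : MeasurableSet[natFilt X m] A)
    (hAN : ∀ ω ∈ A, X m ω < N) {c : ℝ≥0∞} (hc : c ≤ 1)
    (hcl : ∀ n, 0 < n → n < N → c ≤ ENNReal.ofReal (l n)) :
    c * P A ≤ P (A ∩ {ω | X (m + 1) ω = X m ω - 1}) := by
  have hA' := hC.measurableSet_of_natFilt hA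
  have hS : MeasurableSet {ω | X (m + 1) ω = X m ω - 1} :=
    measurableSet_eq_fun (hC.meas _) ((Measurable.of_discrete (f := (· - 1))).comp (hC.meas m))
  let g : ℕ → ℕ → ℝ≥0∞ := fun n n' => if n' = n - 1 then 1 else 0
  have hg : ∀ n < N, c ≤ oneStepMean l r g n := by
    intro n hnN
    rcases Nat.eq_zero_or_pos n with rfl | hn
    · simpa [oneStepMean, g] using hc
    · simp only [oneStepMean, g, if_neg hn.ne', if_pos rfl, mul_one]
      exact (hcl n hn hnN).trans le_add_self
  calc c * P A = ∫⁻ _ in A, c ∂P := (setLIntegral_const A c).symm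
    _ ≤ ∫⁻ ω in A, oneStepMean l r g (X m ω) ∂P :=
        setLIntegral_mono' hA' fun ω hω => hg _ (hAN ω hω)
    _ = ∫⁻ ω in A, g (X m ω) (X (m + 1) ω) ∂P := (hC.setLIntegral_step hA g).symm
    _ = ∫⁻ ω in A, {ω | X (m + 1) ω = X m ω - 1}.indicator 1 ω ∂P := by
        simp only [g, Set.indicator_apply, Set.mem_ofPred_eq, Pi.one_apply]
    _ = P (A ∩ {ω | X (m + 1) ω = X m ω - 1}) := by
        rw [lintegral_indicator_one hS, Measure.restrict_apply hS, Set.inter_comm]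

lemma pow_mul_measure_le_measure_steps_down {m N : ℕ} {A : Set Ω}
    (hA : MeasurableSet[natFilt X m] A) (hAN : ∀ ω ∈ A, X m ω < N) {c : ℝ≥0∞} (hc : c ≤ 1)
    (hcl : ∀ n, 0 < n → n < N → c ≤ ENNReal.ofReal (l n)) (i : ℕ) :
    c ^ i * P A ≤ P (A ∩ {ω | X (m + i) ω = X m ω - i}) := by
  induction i with
  | zero => simp
  | succ i ih =>
    set B := A ∩ {ω | X (m + i) ω = X m ω - i}
    have hB : MeasurableSet[natFilt X (m + i)] B :=
      (natFilt_mono (Nat.le_add_right m i) A hA).inter <| measurableSet_eq_fun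
        (measurable_natFilt le_rfl) ((Measurable.of_discrete (f := (· - i))).comp
          (measurable_natFilt (X := X) (Nat.le_add_right m i)))
    have hBN : ∀ ω ∈ B, X (m + i) ω < N := fun ω hω => by
      have := hAN ω hω.1
      rw [hω.2]
      omega
    calc c ^ (i + 1) * P A = c * (c ^ i * P A) := by ring
      _ ≤ c * P B := by gcongr
      _ ≤ P (B ∩ {ω | X (m + i + 1) ω = X (m + i) ω - 1}) :=
          hC.mul_measure_le_measure_step_down hB hBN hc hcl
      _ ≤ P (A ∩ {ω | X (m + (i + 1)) ω = X m ω - (i + 1)}) := by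
          refine measure_mono fun ω hω => ⟨hω.1.1, ?_⟩
          have h1 := hω.1.2
          have h2 := hω.2
          simp only [Set.mem_ofPred_eq, ← add_assoc] at h1 h2 ⊢
          omega

/-- A path in `(0, N)` at time `m` is at `0` after `N - 1` down steps, and these happen with
probability at least `c ^ (N - 1)`. -/
lemma measure_stoppedOnExit_mem_Ioo_le {N : ℕ} {c : ℝ≥0∞} (hc : c ≤ 1)
    (hcl : ∀ n, 0 < n → n < N → c ≤ ENNReal.ofReal (l n)) (m : ℕ) :
    P {ω | stoppedOnExit X (Set.Ioo 0 N) (m + (N - 1)) ω ∈ Set.Ioo 0 N} ≤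
      (1 - c ^ (N - 1)) * P {ω | stoppedOnExit X (Set.Ioo 0 N) m ω ∈ Set.Ioo 0 N} := by
  have := hC.isProb
  set A := {ω | stoppedOnExit X (Set.Ioo 0 N) m ω ∈ Set.Ioo 0 N}
  set B := A ∩ {ω | X (m + (N - 1)) ω = X m ω - (N - 1)}
  have hA : MeasurableSet[natFilt X m] A :=
    measurable_natFilt_stoppedOnExit X _ m MeasurableSet.of_discrete
  have hAN : ∀ ω ∈ A, X m ω < N := fun ω (hω : _ ∈ Set.Ioo 0 N) =>
    stoppedOnExit_eq_of_mem hω ▸ hω.2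
  have hB : MeasurableSet B := (hC.measurableSet_of_natFilt hA).inter <|
    measurableSet_eq_fun (hC.meas _)
      ((Measurable.of_discrete (f := (· - (N - 1)))).comp (hC.meas m))
  have hsub : {ω | stoppedOnExit X (Set.Ioo 0 N) (m + (N - 1)) ω ∈ Set.Ioo 0 N} ⊆ A \ B := by
    intro ω hω
    refine ⟨mem_of_stoppedOnExit_add_mem hω, fun hωB => ?_⟩
    have hpos := (Set.mem_Ioo.mp hω).1
    rw [stoppedOnExit_eq_of_mem hω, hωB.2] at hpos
    have := hAN ω hωB.1
    omega
  calc _ ≤ P (A \ B) := measure_mono hsub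
    _ = P A - P B := measure_sdiff Set.inter_subset_left hB.nullMeasurableSet (measure_ne_top P B)
    _ ≤ P A - c ^ (N - 1) * P A :=
        tsub_le_tsub_left (hC.pow_mul_measure_le_measure_steps_down hA hAN hc hcl _) _
    _ = (1 - c ^ (N - 1)) * P A := by
        rw [ENNReal.sub_mul fun _ _ => measure_ne_top P A, one_mul]

lemma tendsto_measure_stoppedOnExit_mem_Ioo (N : ℕ) :
    Tendsto (fun m => P {ω | stoppedOnExit X (Set.Ioo 0 N) m ω ∈ Set.Ioo 0 N}) atTop (𝓝 0) := by
  have := hC.isProb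
  set d := fun m => P {ω | stoppedOnExit X (Set.Ioo 0 N) m ω ∈ Set.Ioo 0 N}
  obtain ⟨c, hc0, hc1, hcl⟩ := exists_pos_le_ofReal hC.l_pos N
  have hρ : 1 - c ^ (N - 1) < 1 :=
    ENNReal.sub_lt_self ENNReal.one_ne_top one_ne_zero (pow_ne_zero _ hc0.ne')
  have hgeom (j : ℕ) : d (j * (N - 1)) ≤ (1 - c ^ (N - 1)) ^ j := by
    induction j with
    | zero => simpa using prob_le_one
    | succ j ih =>
      calc d ((j + 1) * (N - 1)) = d (j * (N - 1) + (N - 1)) := by rw [add_one_mul]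
        _ ≤ (1 - c ^ (N - 1)) * d (j * (N - 1)) :=
            hC.measure_stoppedOnExit_mem_Ioo_le hc1 hcl _
        _ ≤ (1 - c ^ (N - 1)) ^ (j + 1) := by rw [pow_succ']; gcongr
  have hanti : Antitone d := antitone_nat_of_succ_le fun m =>
    measure_mono fun ω => mem_of_stoppedOnExit_succ_mem
  have hinf : ⨅ m, d m = 0 := le_antisymm
    (ge_of_tendsto' (ENNReal.tendsto_pow_atTop_nhds_zero_of_lt_one hρ) fun j =>
      (iInf_le d _).trans (hgeom j)) bot_le
  simpa [hinf] using tendsto_atTop_iInf hanti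

lemma lintegral_xp_stoppedOnExit (D : Set ℕ) (m : ℕ) :
    ∫⁻ ω, ENNReal.ofReal (xp l r (stoppedOnExit X D m ω)) ∂P = ENNReal.ofReal (xp l r k) :=
  hC.lintegral_stoppedOnExit (oneStepMean_xp hC.l_pos hC.r_pos hC.lr_one) D m

lemma ofReal_xp_le_mul_measure_forall_ne_zero (hsum : Summable (tp l r)) :
    ENNReal.ofReal (xp l r k) ≤
      ENNReal.ofReal (∑' n, tp l r n) * P {ω | ∀ m, X m ω ≠ 0} := by
  have := hC.isProb
  have hZ (m : ℕ) : MeasurableSet {ω | stoppedOnExit X {n | n ≠ 0} m ω ≠ 0} :=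
    hC.measurable_stoppedOnExit _ m (measurableSet_singleton 0).compl
  have hbound (m : ℕ) : ENNReal.ofReal (xp l r k) ≤
      ENNReal.ofReal (∑' n, tp l r n) * P {ω | stoppedOnExit X {n | n ≠ 0} m ω ≠ 0} := by
    rw [← hC.lintegral_xp_stoppedOnExit {n | n ≠ 0} m, ← lintegral_indicator_const (hZ m)]
    refine lintegral_mono fun ω => ?_
    by_cases h : stoppedOnExit X {n | n ≠ 0} m ω = 0
    · simp [h, xp]
    · rw [Set.indicator_of_mem h]
      exact ENNReal.ofReal_le_ofReal (xp_le_tsum hC.l_pos hC.r_pos hsum _)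
  have hlim : Tendsto (fun m => P {ω | stoppedOnExit X {n | n ≠ 0} m ω ≠ 0}) atTop
      (𝓝 (P {ω | ∀ m, X m ω ≠ 0})) := by
    rw [← iInter_stoppedOnExit_ne_zero]
    exact tendsto_measure_iInter_atTop (fun m => (hZ m).nullMeasurableSet)
      (antitone_nat_of_succ_le fun m ω => mem_of_stoppedOnExit_succ_mem (D := {n | n ≠ 0}))
      ⟨0, measure_ne_top P _⟩
  exact ge_of_tendsto' (ENNReal.Tendsto.const_mul hlim (Or.inr ENNReal.ofReal_ne_top)) hbound

lemma measure_forall_ne_zero_le {N : ℕ} (hN : 1 ≤ N) :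
    P {ω | ∀ m, X m ω ≠ 0} ≤ ENNReal.ofReal (xp l r k / xp l r N) := by
  have := hC.isProb
  have hxN : 0 < xp l r N := by linarith [one_le_xp hC.l_pos hC.r_pos hN]
  have hexit (m : ℕ) : P {ω | N ≤ stoppedOnExit X (Set.Ioo 0 N) m ω} ≤
      ENNReal.ofReal (xp l r k / xp l r N) := by
    rw [ENNReal.ofReal_div_of_pos hxN, ENNReal.le_div_iff_mul_le
      (Or.inl (ENNReal.ofReal_pos.mpr hxN).ne') (Or.inl ENNReal.ofReal_ne_top), mul_comm,
      ← hC.lintegral_xp_stoppedOnExit (Set.Ioo 0 N) m]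
    refine (mul_le_mul_right (measure_mono fun ω hω =>
      ENNReal.ofReal_le_ofReal (xp_mono hC.l_pos hC.r_pos hω)) _).trans
      (mul_meas_ge_le_lintegral₀ ?_ _)
    exact ((Measurable.of_discrete (f := fun n => ENNReal.ofReal (xp l r n))).comp
      (hC.measurable_stoppedOnExit _ m)).aemeasurable
  have hsplit (m : ℕ) : P {ω | ∀ m, X m ω ≠ 0} ≤
      P {ω | stoppedOnExit X (Set.Ioo 0 N) m ω ∈ Set.Ioo 0 N} +
        ENNReal.ofReal (xp l r k / xp l r N) := by
    refine (measure_mono fun ω hω => ?_).trans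
      ((measure_union_le _ _).trans (add_le_add le_rfl (hexit m)))
    obtain ⟨i, -, hi⟩ := exists_stoppedOnExit_eq X (Set.Ioo 0 N) m ω
    have := hω i
    by_cases hZN : stoppedOnExit X (Set.Ioo 0 N) m ω < N
    · exact Or.inl ⟨by omega, hZN⟩
    · exact Or.inr (not_lt.mp hZN)
  simpa using ge_of_tendsto'
    ((hC.tendsto_measure_stoppedOnExit_mem_Ioo N).add_const _) hsplit

lemma measurableSet_forall_ne_zero : MeasurableSet {ω | ∀ m, X m ω ≠ 0} :=
  measurableSet_setOfPred.2 <|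
    Measurable.forall fun m => measurableSet_setOfPred.1 (hC.measurableSet_eq_s6 m 0).compl

lemma measure_forall_ne_zero (hsum : Summable (tp l r)) :
    P {ω | ∀ m, X m ω ≠ 0} = ENNReal.ofReal (xp l r k / ∑' n, tp l r n) := by
  have hS := zero_lt_one.trans_le (one_le_tsum_tp hC.l_pos hC.r_pos hsum)
  refine le_antisymm ?_ ?_
  · refine ge_of_tendsto (ENNReal.tendsto_ofReal
      (tendsto_const_nhds.div (tendsto_xp hsum) hS.ne')) ?_
    filter_upwards [eventually_ge_atTop 1] with N hN using hC.measure_forall_ne_zero_le hN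
  · rw [ENNReal.ofReal_div_of_pos hS]
    exact ENNReal.div_le_of_le_mul' (hC.ofReal_xp_le_mul_measure_forall_ne_zero hsum)

end IsBDChain

/-- If `Σ_{n=0}^∞ t_n < ∞`, then the probability that the chain
started at `k` ever hits `0` equals `(Σ_{n=k}^∞ t_n)/(Σ_{n=0}^∞ t_n)`. -/
theorem stmt6 {Ω : Type*} [MeasurableSpace Ω] (P : Measure Ω) (X : ℕ → Ω → ℕ)
    (k : ℕ) (l r : ℕ → ℝ) (hC : IsBDChain P X k l r)
    (hsum : Summable (tp l r)) :
    P {ω | ∃ m : ℕ, X m ω = 0} =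
      ENNReal.ofReal ((∑' n : ℕ, tp l r (k + n)) / (∑' n : ℕ, tp l r n)) := by
  have := hC.isProb
  have hS := zero_lt_one.trans_le (one_le_tsum_tp hC.l_pos hC.r_pos hsum)
  have hcompl : {ω | ∃ m, X m ω = 0} = {ω | ∀ m, X m ω ≠ 0}ᶜ := by
    ext
    simp
  rw [hcompl, prob_compl_eq_one_sub hC.measurableSet_forall_ne_zero,
    hC.measure_forall_ne_zero hsum, ← ENNReal.ofReal_one,
    ← ENNReal.ofReal_sub _ (div_nonneg (xp_nonneg hC.l_pos hC.r_pos k) hS.le),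
    tsum_tp_add hsum, sub_div, div_self hS.ne']
end
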